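/- arXiv:2605.00603 — 2 statements merged into one kernel-verified Lean document; each statement's English description precedes it below -/
import Mathlib

section
/- Let n be a natural number and let α, β, γ be nonnegative reals with γ = log₂((1+√5)/2). If either (i) α ≤ n/2 and β ≤ (n-α)/2, or (ii) β ≤ n/2 and α ≤ (n-β)/2, then α^γ + β^γ ≤ n^γ. -/
/-!
With `a = n/2` and `b = n/4`, the exponent `γ = log₂ φ` is chosen so that `a^γ + b^γ = n^γ`,
because `(1/2)^γ + (1/4)^γ = φ⁻¹ + φ⁻² = 1`. Bounding `α^γ` and `β^γ` by the tangent lines of the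
concave function `t ↦ t^γ` at `a` and `b`, the constraint `β - b ≤ (a - α)/2` shows that the linear
error terms sum to `γ (a - α)/a · (b^γ - a^γ) ≤ 0`.
-/

open Real goldenRatio

lemma rpow_le_rpow_mul_tangent {p c x : ℝ} (hp₀ : 0 ≤ p) (hp₁ : p ≤ 1) (hc : 0 < c)
    (hx : 0 ≤ x) : x ^ p ≤ c ^ p * (1 + p * (x / c - 1)) := by
  have bernoulli : (1 + (x / c - 1)) ^ p ≤ 1 + p * (x / c - 1) :=
    rpow_one_add_le_one_add_mul_self (by linarith [div_nonneg hx hc.le]) hp₀ hp₁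
  calc x ^ p = c ^ p * (x / c) ^ p := by
        rw [← mul_rpow hc.le (div_nonneg hx hc.le), mul_div_cancel₀ x hc.ne']
    _ ≤ c ^ p * (1 + p * (x / c - 1)) := by
        gcongr
        simpa using bernoulli

lemma rpow_add_rpow_le_of_le_half {p N α β : ℝ} (hp₀ : 0 ≤ p) (hp₁ : p ≤ 1)
    (hα : 0 ≤ α) (hβ : 0 ≤ β) (hαN : α ≤ N / 2) (hβN : β ≤ (N - α) / 2) :
    α ^ p + β ^ p ≤ (N / 2) ^ p + (N / 4) ^ p := by
  rcases (show 0 ≤ N by linarith).eq_or_lt with rfl | hN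
  · obtain rfl : α = 0 := by linarith
    obtain rfl : β = 0 := by linarith
    norm_num
  set a := N / 2 with ha_def
  set b := N / 4 with hb_def
  have ha : 0 < a := by positivity
  have hb : 0 < b := by positivity
  have hba : b ^ p ≤ a ^ p := by gcongr; linarith
  have hβb : β / b - 1 ≤ 1 - α / a := by
    rw [div_sub_one hb.ne', one_sub_div ha.ne', div_le_div_iff₀ hb ha]
    nlinarith
  have hαa : 0 ≤ 1 - α / a := by rw [sub_nonneg, div_le_one ha]; exact hαN
  have herror : a ^ p * (α / a - 1) + b ^ p * (β / b - 1) ≤ 0 := calc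
    _ ≤ a ^ p * (α / a - 1) + b ^ p * (1 - α / a) := by gcongr
    _ = -((1 - α / a) * (a ^ p - b ^ p)) := by ring
    _ ≤ 0 := neg_nonpos.2 (mul_nonneg hαa (sub_nonneg.2 hba))
  calc α ^ p + β ^ p ≤ a ^ p * (1 + p * (α / a - 1)) + b ^ p * (1 + p * (β / b - 1)) :=
        add_le_add (rpow_le_rpow_mul_tangent hp₀ hp₁ ha hα) (rpow_le_rpow_mul_tangent hp₀ hp₁ hb hβ)
    _ = a ^ p + b ^ p + p * (a ^ p * (α / a - 1) + b ^ p * (β / b - 1)) := by ring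
    _ ≤ a ^ p + b ^ p := by linarith [mul_nonpos_of_nonneg_of_nonpos hp₀ herror]

lemma logb_two_goldenRatio_mem_Icc : logb 2 φ ∈ Set.Icc (0 : ℝ) 1 := by
  refine ⟨logb_nonneg one_lt_two one_lt_goldenRatio.le, ?_⟩
  rw [logb_le_iff_le_rpow one_lt_two goldenRatio_pos, rpow_one]
  exact goldenRatio_lt_two.le

lemma half_rpow_add_quarter_rpow_logb_two_goldenRatio :
    (1 / 2 : ℝ) ^ logb 2 φ + (1 / 4 : ℝ) ^ logb 2 φ = 1 := by
  have hhalf : (1 / 2 : ℝ) ^ logb 2 φ = φ⁻¹ := by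
    rw [one_div, inv_rpow zero_le_two, rpow_logb zero_lt_two (by norm_num) goldenRatio_pos]
  have hquarter : (1 / 4 : ℝ) ^ logb 2 φ = φ⁻¹ ^ 2 := by
    rw [show (1 / 4 : ℝ) = (1 / 2) ^ (2 : ℝ) by norm_num, ← rpow_mul (by norm_num), mul_comm,
      rpow_mul (by norm_num), hhalf, rpow_two]
  rw [hhalf, hquarter, inv_goldenRatio, neg_sq, goldenConj_sq]
  ring

lemma rpow_logb_two_goldenRatio_eq {N : ℝ} (hN : 0 ≤ N) :
    (N / 2) ^ logb 2 φ + (N / 4) ^ logb 2 φ = N ^ logb 2 φ := by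
  simp only [div_eq_mul_one_div N]
  rw [mul_rpow hN (by norm_num), mul_rpow hN (by norm_num), ← mul_add,
    half_rpow_add_quarter_rpow_logb_two_goldenRatio, mul_one]

theorem stmt_2 (n : ℕ) (α β γ : ℝ) (hα : 0 ≤ α) (hβ : 0 ≤ β)
    (hγ : γ = Real.logb 2 ((1 + Real.sqrt 5) / 2))
    (h : (α ≤ (n : ℝ) / 2 ∧ β ≤ ((n : ℝ) - α) / 2) ∨
         (β ≤ (n : ℝ) / 2 ∧ α ≤ ((n : ℝ) - β) / 2)) :
    α ^ γ + β ^ γ ≤ (n : ℝ) ^ γ := by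
  obtain ⟨hγ₀, hγ₁⟩ : γ ∈ Set.Icc (0 : ℝ) 1 := hγ ▸ logb_two_goldenRatio_mem_Icc
  rw [hγ, ← rpow_logb_two_goldenRatio_eq n.cast_nonneg, ← hγ]
  rcases h with ⟨hαn, hβn⟩ | ⟨hβn, hαn⟩
  · exact rpow_add_rpow_le_of_le_half hγ₀ hγ₁ hα hβ hαn hβn
  · rw [add_comm]
    exact rpow_add_rpow_le_of_le_half hγ₀ hγ₁ hβ hα hβn hαn
end

section
/- In any upward-planar layered drawing of the complete bipartite DAG K_{2,2s} with all edges directed from the two vertices u, v of degree 2s toward the 2s vertices of degree 2, some edge has span at least s. -/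
/-!
Both sources lie strictly below every target. If three targets shared a level, one of them, `B`,
would lie between the other two, `A` and `C`. Let `u` be the higher source and `v` the lower one.
At the height of `u`, the edge `vB` passes on one side of `u`, and at the top it ends at `B`,
which lies on the other side of `A` or of `C`; so by the intermediate value theorem `vB` crosses
`uA` or `uC`. Hence each level holds at most two of the `2s` targets, and by pigeonhole they cannot
all fit into the `s - 1` levels strictly between `y(u)` and `y(u) + s`.
-/

open Set
open scoped Finset

noncomputable def pointAtHeight (p q : ℝ × ℝ) (t : ℝ) : ℝ × ℝ :=
  AffineMap.lineMap p q ((t - p.2) / (q.2 - p.2))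

lemma pointAtHeight_snd {p q : ℝ × ℝ} (h : p.2 ≠ q.2) (t : ℝ) : (pointAtHeight p q t).2 = t := by
  have : q.2 - p.2 ≠ 0 := sub_ne_zero.2 h.symm
  simp only [pointAtHeight, AffineMap.lineMap_apply_module, Prod.snd_add, Prod.smul_snd,
    smul_eq_mul]
  field_simp
  ring

@[simp] lemma pointAtHeight_start (p q : ℝ × ℝ) : pointAtHeight p q p.2 = p := by
  simp [pointAtHeight]

lemma pointAtHeight_end {p q : ℝ × ℝ} (h : p.2 ≠ q.2) : pointAtHeight p q q.2 = q := by
  simp [pointAtHeight, div_self (sub_ne_zero.2 h.symm)]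

lemma continuous_pointAtHeight (p q : ℝ × ℝ) : Continuous (pointAtHeight p q) :=
  AffineMap.lineMap_continuous.comp (by fun_prop)

lemma pointAtHeight_mem_segment {p q : ℝ × ℝ} {t : ℝ} (ht : t ∈ Icc p.2 q.2) (h : p.2 < q.2) :
    pointAtHeight p q t ∈ segment ℝ p q := by
  have hd : 0 < q.2 - p.2 := sub_pos.2 h
  refine lineMap_mem_segment ℝ p q ⟨div_nonneg (by linarith [ht.1]) hd.le, ?_⟩
  rw [div_le_one hd]; linarith [ht.2]

lemma segment_inter_nonempty_of_mul_nonpos {p q p' q' : ℝ × ℝ} {h₀ h₁ : ℝ} (hh : h₀ < h₁)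
    (hp : p.2 ≤ h₀) (hq : h₁ ≤ q.2) (hp' : p'.2 ≤ h₀) (hq' : h₁ ≤ q'.2)
    (hsign : ((pointAtHeight p q h₀).1 - (pointAtHeight p' q' h₀).1) *
      ((pointAtHeight p q h₁).1 - (pointAtHeight p' q' h₁).1) ≤ 0) :
    (segment ℝ p q ∩ segment ℝ p' q').Nonempty := by
  set d : ℝ → ℝ := fun t => (pointAtHeight p q t).1 - (pointAtHeight p' q' t).1
  have hd : ContinuousOn d (uIcc h₀ h₁) :=
    ((continuous_fst.comp (continuous_pointAtHeight p q)).sub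
      (continuous_fst.comp (continuous_pointAtHeight p' q'))).continuousOn
  have hzero : (0 : ℝ) ∈ uIcc (d h₀) (d h₁) := by
    rw [mem_uIcc]
    rcases mul_nonpos_iff.1 hsign with h | h
    · exact Or.inr ⟨h.2, h.1⟩
    · exact Or.inl h
  obtain ⟨t, ht, hdt⟩ := intermediate_value_uIcc hd hzero
  rw [uIcc_of_le hh.le] at ht
  have hpq : p.2 < q.2 := by linarith
  have hpq' : p'.2 < q'.2 := by linarith
  have hmeet : pointAtHeight p q t = pointAtHeight p' q' t :=
    Prod.ext (sub_eq_zero.1 hdt) (by rw [pointAtHeight_snd hpq.ne, pointAtHeight_snd hpq'.ne])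
  refine ⟨pointAtHeight p q t, pointAtHeight_mem_segment ⟨hp.trans ht.1, ht.2.trans hq⟩ hpq, ?_⟩
  rw [hmeet]
  exact pointAtHeight_mem_segment ⟨hp'.trans ht.1, ht.2.trans hq'⟩ hpq'

lemma mul_sub_nonpos_of_mem_uIcc {a b c : ℝ} (h : b ∈ uIcc a c) : (a - b) * (c - b) ≤ 0 := by
  rcases mem_uIcc.1 h with h | h <;> nlinarith [h.1, h.2]

lemma segment_inter_nonempty_of_three_on_line {u v A B C : ℝ × ℝ} {L : ℝ}
    (hvu : v.2 ≤ u.2) (huL : u.2 < L) (hA : A.2 = L) (hB : B.2 = L) (hC : C.2 = L)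
    (hABC : B.1 ∈ uIcc A.1 C.1) :
    (segment ℝ u A ∩ segment ℝ v B).Nonempty ∨ (segment ℝ u C ∩ segment ℝ v B).Nonempty := by
  have hend : ∀ {w E : ℝ × ℝ}, w.2 < L → E.2 = L → pointAtHeight w E L = E := fun hw hE => by
    rw [← hE]; exact pointAtHeight_end (hE ▸ hw.ne)
  have hvL : v.2 < L := hvu.trans_lt huL
  have crossing : ∀ {E : ℝ × ℝ}, E.2 = L →
      (u.1 - (pointAtHeight v B u.2).1) * (E.1 - B.1) ≤ 0 →
      (segment ℝ u E ∩ segment ℝ v B).Nonempty := fun hE hsign =>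
    segment_inter_nonempty_of_mul_nonpos huL le_rfl hE.ge hvu hB.ge
      (by rwa [pointAtHeight_start, hend huL hE, hend hvL hB])
  by_cases hsA : (u.1 - (pointAtHeight v B u.2).1) * (A.1 - B.1) ≤ 0
  · exact .inl (crossing hA hsA)
  · refine .inr (crossing hC ?_)
    nlinarith [mul_sub_nonpos_of_mem_uIcc hABC, sq_nonneg (u.1 - (pointAtHeight v B u.2).1)]

lemma false_of_disjoint_segments_to_three_on_line {u v A B C : ℝ × ℝ} {L : ℝ}
    (hu : u.2 < L) (hv : v.2 < L) (hA : A.2 = L) (hB : B.2 = L) (hC : C.2 = L)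
    (hABC : B.1 ∈ uIcc A.1 C.1)
    (huA : Disjoint (segment ℝ u A) (segment ℝ v B))
    (huC : Disjoint (segment ℝ u C) (segment ℝ v B))
    (hvA : Disjoint (segment ℝ v A) (segment ℝ u B))
    (hvC : Disjoint (segment ℝ v C) (segment ℝ u B)) :
    False := by
  rcases le_total v.2 u.2 with h | h
  · rcases segment_inter_nonempty_of_three_on_line h hu hA hB hC hABC with h' | h'
    · exact h'.not_disjoint huA
    · exact h'.not_disjoint huC
  · rcases segment_inter_nonempty_of_three_on_line h hv hA hB hC hABC with h' | h'
    · exact h'.not_disjoint hvA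
    · exact h'.not_disjoint hvC

lemma mem_uIcc_or_mem_uIcc_or_mem_uIcc (a b c : ℝ) :
    b ∈ uIcc a c ∨ a ∈ uIcc b c ∨ c ∈ uIcc a b := by
  simp only [mem_uIcc]
  rcases le_total a b with h1 | h1 <;> rcases le_total b c with h2 | h2 <;>
    rcases le_total a c with h3 | h3 <;> tauto

theorem card_le_two_of_disjoint_segments {ι : Type*} {u v : ℝ × ℝ} {w : ι → ℝ × ℝ}
    (hu : ∀ j, u.2 < (w j).2) (hv : ∀ j, v.2 < (w j).2)
    (hdisj : ∀ j j', j ≠ j' → Disjoint (segment ℝ u (w j)) (segment ℝ v (w j')))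
    {L : ℝ} {s : Finset ι} (hs : ∀ j ∈ s, (w j).2 = L) : s.card ≤ 2 := by
  by_contra! h
  obtain ⟨a, ha, b, hb, c, hc, hab, hac, hbc⟩ := Finset.two_lt_card.1 h
  have middle : ∀ {j₁ j₂ j₃}, j₁ ∈ s → j₂ ∈ s → j₃ ∈ s → j₁ ≠ j₂ → j₃ ≠ j₂ →
      (w j₂).1 ∈ uIcc (w j₁).1 (w j₃).1 → False := fun h₁ h₂ h₃ h₁₂ h₃₂ hmid =>
    false_of_disjoint_segments_to_three_on_line ((hs _ h₂) ▸ hu _) ((hs _ h₂) ▸ hv _)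
      (hs _ h₁) (hs _ h₂) (hs _ h₃) hmid (hdisj _ _ h₁₂) (hdisj _ _ h₃₂)
      (hdisj _ _ h₁₂.symm).symm (hdisj _ _ h₃₂.symm).symm
  rcases mem_uIcc_or_mem_uIcc_or_mem_uIcc (w a).1 (w b).1 (w c).1 with h | h | h
  · exact middle ha hb hc hab hbc.symm h
  · exact middle hb ha hc hab.symm hac.symm h
  · exact middle ha hc hb hac hbc h

lemma exists_add_le_of_card_fiber_le_two {ι : Type*} [Fintype ι] {s : ℕ} (hs : 0 < s)
    (hι : 2 * s ≤ Fintype.card ι) {f : ι → ℤ} {b : ℤ} (hb : ∀ j, b < f j)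
    (hfib : ∀ t, #{j | f j = t} ≤ 2) : ∃ j, b + s ≤ f j := by
  by_contra! h
  have hmaps : ∀ j ∈ Finset.univ, f j ∈ Finset.Ioo b (b + s) := fun j _ =>
    Finset.mem_Ioo.2 ⟨hb j, h j⟩
  have hcard : #(Finset.Ioo b (b + s)) * 2 < #(Finset.univ : Finset ι) := by
    rw [Int.card_Ioo, Finset.card_univ]
    omega
  obtain ⟨t, -, ht⟩ := Finset.exists_lt_card_fiber_of_mul_lt_card_of_maps_to hmaps hcard
  exact (hfib t).not_gt ht

theorem stmt_15_general (s : ℕ) (hs : 1 ≤ s)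
    (x : Fin 2 ⊕ Fin (2 * s) → ℝ) (y : Fin 2 ⊕ Fin (2 * s) → ℤ)
    (hup : ∀ (i : Fin 2) (j : Fin (2 * s)), y (Sum.inl i) < y (Sum.inr j))
    (hcross : ∀ (i i' : Fin 2) (j j' : Fin (2 * s)), ¬(i = i' ∧ j = j') →
      ∀ p : ℝ × ℝ,
        p ∈ segment ℝ (x (Sum.inl i), (y (Sum.inl i) : ℝ)) (x (Sum.inr j), (y (Sum.inr j) : ℝ)) →
        p ∈ segment ℝ (x (Sum.inl i'), (y (Sum.inl i') : ℝ)) (x (Sum.inr j'), (y (Sum.inr j') : ℝ)) →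
        (i = i' ∧ p = (x (Sum.inl i), (y (Sum.inl i) : ℝ))) ∨
        (j = j' ∧ p = (x (Sum.inr j), (y (Sum.inr j) : ℝ)))) :
    ∃ (i : Fin 2) (j : Fin (2 * s)), (s : ℤ) ≤ y (Sum.inr j) - y (Sum.inl i) := by
  let point (v : Fin 2 ⊕ Fin (2 * s)) : ℝ × ℝ := (x v, (y v : ℝ))
  have hdisj : ∀ j j', j ≠ j' →
      Disjoint (segment ℝ (point (.inl 0)) (point (.inr j)))
        (segment ℝ (point (.inl 1)) (point (.inr j'))) := fun j j' hj =>
    Set.disjoint_left.2 fun p h₀ h₁ => by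
      rcases hcross 0 1 j j' (by simp) p h₀ h₁ with h | h
      · exact absurd h.1 (by decide)
      · exact hj h.1
  have hlevel : ∀ t : ℤ, #{j | y (.inr j) = t} ≤ 2 := fun t =>
    card_le_two_of_disjoint_segments (w := fun j => point (.inr j))
      (fun j => Int.cast_lt.2 (hup 0 j)) (fun j => Int.cast_lt.2 (hup 1 j)) hdisj
      (L := t) (by simp [point])
  obtain ⟨j, hj⟩ := exists_add_le_of_card_fiber_le_two hs (by simp) (hup 0) hlevel
  exact ⟨0, j, by omega⟩

/-- In any upward-planar layered (straight-line) drawing of the complete bipartite DAG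
`K_{2,2s}` with all edges directed from the two high-degree vertices toward the `2s`
degree-2 vertices, some edge has span at least `s`. -/
theorem stmt_15 (s : ℕ) (hs : 1 ≤ s)
    (x : Fin 2 ⊕ Fin (2 * s) → ℝ) (y : Fin 2 ⊕ Fin (2 * s) → ℤ)
    (hinj : Function.Injective (fun v => (x v, (y v : ℝ))))
    (hup : ∀ (i : Fin 2) (j : Fin (2 * s)), y (Sum.inl i) < y (Sum.inr j))
    (hcross : ∀ (i i' : Fin 2) (j j' : Fin (2 * s)), ¬(i = i' ∧ j = j') →
      ∀ p : ℝ × ℝ,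
        p ∈ segment ℝ (x (Sum.inl i), (y (Sum.inl i) : ℝ)) (x (Sum.inr j), (y (Sum.inr j) : ℝ)) →
        p ∈ segment ℝ (x (Sum.inl i'), (y (Sum.inl i') : ℝ)) (x (Sum.inr j'), (y (Sum.inr j') : ℝ)) →
        (i = i' ∧ p = (x (Sum.inl i), (y (Sum.inl i) : ℝ))) ∨
        (j = j' ∧ p = (x (Sum.inr j), (y (Sum.inr j) : ℝ)))) :
    ∃ (i : Fin 2) (j : Fin (2 * s)), (s : ℤ) ≤ y (Sum.inr j) - y (Sum.inl i) :=
  stmt_15_general s hs x y hup hcross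
end
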